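/- arXiv:1703.09314 — 2 statements merged into one kernel-verified Lean document; each statement's English description precedes it below -/
import Mathlib

section
/- In RC∇, if A ⊢ ∇ₙB and m < n, then A ∧ ◇ₘC ⊢ ∇ₙ(B ∧ ◇ₘC); moreover if A ⊢ ∇ₙB and B ⊢ ∇ₙC then A ⊢ ∇ₙC, and if A ⊢ ∇ₙB and B ⊢ ◇ₙC then A ⊢ ◇ₙC. -/
/-- Strictly positive formulas of RC∇: built from ⊤, variables, ∧, ◇ₙ and ∇ₙ. -/
inductive Fm : Type
  | top : Fm
  | var : ℕ → Fm
  | and : Fm → Fm → Fm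
  | dia : ℕ → Fm → Fm
  | nab : ℕ → Fm → Fm

/-- Derivability of sequents `A ⊢ B` in RC∇. -/
inductive Prf : Fm → Fm → Prop
  | refl (A) : Prf A A
  | top (A) : Prf A .top
  | cut {A B C} : Prf A B → Prf B C → Prf A C
  | andL (A B) : Prf (.and A B) A
  | andR (A B) : Prf (.and A B) B
  | andI {A B C} : Prf A B → Prf A C → Prf A (.and B C)
  | diaMono {A B} (n) : Prf A B → Prf (.dia n A) (.dia n B)
  | diaTrans (n A) : Prf (.dia n (.dia n A)) (.dia n A)
  | diaDown {m n} (A) : m < n → Prf (.dia n A) (.dia m A)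
  | diaJ {m n} (A B) : m < n →
      Prf (.and (.dia n A) (.dia m B)) (.dia n (.and A (.dia m B)))
  | nabMono {A B} (n) : Prf A B → Prf (.nab n A) (.nab n B)
  | nabTrans (n A) : Prf (.nab n (.nab n A)) (.nab n A)
  | nabDown {m n} (A) : m < n → Prf (.nab n A) (.nab m A)
  | nabJ {m n} (A B) : m < n →
      Prf (.and (.nab n A) (.nab m B)) (.nab n (.and A (.nab m B)))
  | nabIntro (n A) : Prf A (.nab n A)
  | diaNab (n A) : Prf (.dia n A) (.nab n A)
  | diaNabAbs {m n} (A) : m ≤ n → Prf (.dia m (.nab n A)) (.dia m A)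
  | nabDiaAbs {m n} (A) : m ≤ n → Prf (.nab n (.dia m A)) (.dia m A)

namespace Prf

variable {A A' B B' C : Fm}

theorem and_mono (hA : Prf A A') (hB : Prf B B') : Prf (.and A B) (.and A' B') :=
  .andI (.cut (.andL _ _) hA) (.cut (.andR _ _) hB)

/-- `A ∧ ◇ₘC ⊢ ∇ₙB ∧ ∇ₘ◇ₘC ⊢ ∇ₙ(B ∧ ∇ₘ◇ₘC) ⊢ ∇ₙ(B ∧ ◇ₘC)`, by the ∇-version of axiom J. -/
theorem and_dia_of_nab {m n : ℕ} (hmn : m < n) (h : Prf A (.nab n B)) :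
    Prf (.and A (.dia m C)) (.nab n (.and B (.dia m C))) :=
  (and_mono h (nabIntro m _)).cut <|
    (nabJ B _ hmn).cut <| nabMono n <| and_mono (refl B) (nabDiaAbs C le_rfl)

theorem nab_cut {n : ℕ} (hAB : Prf A (.nab n B)) (hBC : Prf B (.nab n C)) :
    Prf A (.nab n C) :=
  hAB.cut <| (nabMono n hBC).cut (nabTrans n C)

theorem nab_cut_dia {n : ℕ} (hAB : Prf A (.nab n B)) (hBC : Prf B (.dia n C)) :
    Prf A (.dia n C) :=
  hAB.cut <| (nabMono n hBC).cut (nabDiaAbs C le_rfl)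

end Prf

/-- In RC∇: (i) if A ⊢ ∇ₙB and m < n then A ∧ ◇ₘC ⊢ ∇ₙ(B ∧ ◇ₘC);
(ii) if A ⊢ ∇ₙB and B ⊢ ∇ₙC then A ⊢ ∇ₙC;
(iii) if A ⊢ ∇ₙB and B ⊢ ◇ₙC then A ⊢ ◇ₙC. -/
theorem stmt_5 (n : ℕ) :
    (∀ m A B C, m < n → Prf A (.nab n B) →
      Prf (.and A (.dia m C)) (.nab n (.and B (.dia m C)))) ∧
    (∀ A B C, Prf A (.nab n B) → Prf B (.nab n C) → Prf A (.nab n C)) ∧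
    (∀ A B C, Prf A (.nab n B) → Prf B (.dia n C) → Prf A (.dia n C)) :=
  ⟨fun _ _ _ _ hmn h => Prf.and_dia_of_nab hmn h,
    fun _ _ _ h₁ h₂ => Prf.nab_cut h₁ h₂,
    fun _ _ _ h₁ h₂ => Prf.nab_cut_dia h₁ h₂⟩
end

section
/- Let α : ℕ → Ordinal be a bounded sequence (each αᵢ < ε₀ and αᵢ = 0 for all but finitely many i). Define β by: if n is the largest index with αₙ ≠ 0 (or all αᵢ = 0), set βᵢ = 0 for i > n, βₙ = αₙ, and for i < n, βᵢ = αᵢ if ℓ(αᵢ) ≥ β_{i+1}, else βᵢ = αᵢ + ω^{β_{i+1}}. Then β ∈ I, β pointwise dominates α (βᵢ ≥ αᵢ for all i), and β is the pointwise-least such element of I: for any γ ∈ I with γᵢ ≥ αᵢ for all i, γᵢ ≥ βᵢ for all i. -/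
open Ordinal

/-! The term `b i` is forced to be the least ordinal `≥ a i` whose last Cantor exponent is
`≥ b (i + 1)`. If `a i` already qualifies, that is `a i`; otherwise any such `c > a i` is a
multiple of `ω ^ b (i + 1)`, hence `c ≥ a i + ω ^ b (i + 1)`, and this ordinal qualifies
because its last exponent is exactly `b (i + 1)`. -/

/-- `ell β` is the exponent of the last (smallest) term of the Cantor normal
form of `β` (base ω), with `ell 0 = 0`. -/
noncomputable def ell (b : Ordinal) : Ordinal :=
  ((Ordinal.CNF omega0 b).map Prod.fst).getLastD 0

/-- `ε₀`, the least ordinal `α` with `ω ^ α = α`. -/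
noncomputable def eps0 : Ordinal := Ordinal.nfp (fun a => omega0 ^ a) 0

/-- Membership in the Ignatiev set `I`: sequences of ordinals below `ε₀` with
`α (i+1) ≤ ℓ (α i)` for all `i`. -/
def IgMem (a : ℕ → Ordinal) : Prop :=
  (∀ i, a i < eps0) ∧ ∀ i, a (i + 1) ≤ ell (a i)

lemma ell_zero : ell 0 = 0 := by
  rw [ell, CNF.zero_right]
  rfl

lemma ell_opow_mul {e x : Ordinal} (hx : x ≠ 0) (hxω : x < ω) : ell (ω ^ e * x) = e := by
  have h := CNF.opow_mul_add (y := 0) one_lt_omega0 hx hxω (opow_pos e omega0_pos)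
  rw [add_zero] at h
  rw [ell, h, CNF.zero_right]
  rfl

lemma ell_opow (e : Ordinal) : ell (ω ^ e) = e := by
  simpa using ell_opow_mul (e := e) one_ne_zero one_lt_omega0

lemma ell_opow_mul_add {e x y : Ordinal} (hx : x ≠ 0) (hxω : x < ω) (hy : y < ω ^ e)
    (hy0 : y ≠ 0) : ell (ω ^ e * x + y) = ell y := by
  have hne : (CNF ω y).map Prod.fst ≠ [] := by simp [CNF.ne_zero hy0]
  rw [ell, CNF.opow_mul_add one_lt_omega0 hx hxω hy, List.map_cons, List.getLastD_cons, ell,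
    List.getLastD_eq_getLast?, List.getLastD_eq_getLast?, List.getLast?_eq_some_getLast hne]
  rfl

lemma ell_le_log (c : Ordinal) : ell c ≤ log ω c := by
  rcases eq_or_ne c 0 with rfl | hc
  · rw [ell_zero]
    exact zero_le
  · obtain ⟨p, hp, hpc⟩ : ∃ p ∈ CNF ω c, p.1 = ell c := by
      rw [← List.mem_map, ell, CNF.ne_zero hc, List.map_cons, List.getLastD_cons]
      exact List.getLastD_mem_cons
    exact hpc ▸ CNF.fst_le_log hp

lemma opow_ell_dvd (c : Ordinal) : ω ^ ell c ∣ c := by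
  refine CNF.rec ω (dvd_zero _) (fun c hc IH => ?_) c
  set e := log ω c
  set r := c % ω ^ e
  have hq : c / ω ^ e ≠ 0 := (div_opow_log_pos ω hc).ne'
  have hqω : c / ω ^ e < ω := div_opow_log_lt c one_lt_omega0
  have hr : r < ω ^ e := mod_lt _ (opow_ne_zero _ omega0_ne_zero)
  have hc' : c = ω ^ e * (c / ω ^ e) + r := (div_add_mod c _).symm
  rcases eq_or_ne r 0 with hr0 | hr0
  · rw [hc', hr0, add_zero, ell_opow_mul hq hqω]
    exact dvd_mul_right _ _
  · have hre : ell r ≤ e := (ell_le_log r).trans (log_mono_right _ (mod_le _ _))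
    rw [hc', ell_opow_mul_add hq hqω hr hr0]
    exact dvd_add ((opow_dvd_opow ω hre).mul_right _) IH

lemma ell_add_opow (δ γ : Ordinal) : ell (δ + ω ^ γ) = γ := by
  refine CNF.rec ω (by rw [zero_add, ell_opow]) (fun δ hδ IH => ?_) δ
  set e := log ω δ
  set q := δ / ω ^ e
  set r := δ % ω ^ e
  have hq0 : q ≠ 0 := (div_opow_log_pos ω hδ).ne'
  have hqω : q < ω := div_opow_log_lt δ one_lt_omega0
  have hr : r < ω ^ e := mod_lt _ (opow_ne_zero _ omega0_ne_zero)
  have hδ' : δ = ω ^ e * q + r := (div_add_mod δ _).symm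
  rcases lt_trichotomy γ e with hγ | rfl | hγ
  · have hsum : r + ω ^ γ < ω ^ e :=
      isPrincipal_add_omega0_opow e hr ((opow_lt_opow_iff_right one_lt_omega0).2 hγ)
    have hsum0 : r + ω ^ γ ≠ 0 := ((opow_pos γ omega0_pos).trans_le le_add_self).ne'
    rw [hδ', add_assoc, ell_opow_mul_add hq0 hqω hsum hsum0, IH]
  · rw [hδ', add_assoc, add_omega0_opow hr, ← mul_add_one]
    exact ell_opow_mul (add_pos_of_right zero_lt_one q).ne' (isSuccLimit_omega0.succ_lt hqω)
  · have hδγ : δ < ω ^ γ :=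
      (lt_opow_succ_log_self one_lt_omega0 δ).trans_le
        ((opow_le_opow_iff_right one_lt_omega0).2 (Order.succ_le_of_lt hγ))
    rw [add_omega0_opow hδγ, ell_opow]

lemma add_opow_le_of_dvd {a c γ : Ordinal} (hac : a < c) (hdvd : ω ^ γ ∣ c) :
    a + ω ^ γ ≤ c := by
  obtain ⟨m, rfl⟩ := hdvd
  have hω : ω ^ γ ≠ 0 := opow_ne_zero _ omega0_ne_zero
  have hqm : a / ω ^ γ < m := (lt_mul_iff_div_lt hω).1 hac
  calc a + ω ^ γ = ω ^ γ * (a / ω ^ γ) + (a % ω ^ γ + ω ^ γ) := by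
        rw [← add_assoc, div_add_mod]
    _ = ω ^ γ * (a / ω ^ γ + 1) := by
        rw [add_omega0_opow (mod_lt _ hω), mul_add_one]
    _ ≤ ω ^ γ * m := mul_le_mul_right (Order.add_one_le_iff.2 hqm) _

lemma add_opow_le_of_le_ell {a c γ : Ordinal} (hac : a < c) (hγ : γ ≤ ell c) :
    a + ω ^ γ ≤ c :=
  add_opow_le_of_dvd hac ((opow_dvd_opow ω hγ).trans (opow_ell_dvd c))

lemma opow_eps0 : ω ^ eps0 = eps0 :=
  nfp_fp (isNormal_opow one_lt_omega0) 0

lemma opow_lt_eps0 {x : Ordinal} (hx : x < eps0) : ω ^ x < eps0 := by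
  conv_rhs => rw [← opow_eps0]
  exact (opow_lt_opow_iff_right one_lt_omega0).2 hx

lemma add_lt_eps0 {x y : Ordinal} (hx : x < eps0) (hy : y < eps0) : x + y < eps0 := by
  have h := isPrincipal_add_omega0_opow eps0
  rw [opow_eps0] at h
  exact h hx hy

noncomputable def raiseEll (x β : Ordinal) : Ordinal :=
  if β ≤ ell x then x else x + ω ^ β

lemma le_raiseEll (x β : Ordinal) : x ≤ raiseEll x β := by
  unfold raiseEll
  split_ifs
  exacts [le_rfl, le_self_add]

lemma le_ell_raiseEll (x β : Ordinal) : β ≤ ell (raiseEll x β) := by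
  unfold raiseEll
  split_ifs with h
  exacts [h, (ell_add_opow x β).ge]

lemma raiseEll_lt_eps0 {x β : Ordinal} (hx : x < eps0) (hβ : β < eps0) :
    raiseEll x β < eps0 := by
  unfold raiseEll
  split_ifs
  exacts [hx, add_lt_eps0 hx (opow_lt_eps0 hβ)]

lemma raiseEll_le {x β c : Ordinal} (hxc : x ≤ c) (hβc : β ≤ ell c) : raiseEll x β ≤ c := by
  unfold raiseEll
  split_ifs with h
  · exact hxc
  · have hne : x ≠ c := by
      rintro rfl
      exact h hβc
    exact add_opow_le_of_le_ell (hxc.lt_of_ne hne) hβc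

section minCover

variable (a : ℕ → Ordinal) (n : ℕ)

noncomputable def minCover (i : ℕ) : Ordinal :=
  if h : n ≤ i then a i else raiseEll (a i) (minCover (i + 1))
termination_by n - i

lemma minCover_of_le {i : ℕ} (h : n ≤ i) : minCover a n i = a i := by
  rw [minCover, dif_pos h]

lemma minCover_of_lt {i : ℕ} (h : i < n) :
    minCover a n i = raiseEll (a i) (minCover a n (i + 1)) := by
  rw [minCover, dif_neg h.not_ge]

lemma le_minCover (i : ℕ) : a i ≤ minCover a n i := by
  rcases le_or_gt n i with h | h
  · exact (minCover_of_le a n h).ge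
  · exact (minCover_of_lt a n h).symm ▸ le_raiseEll _ _

lemma minCover_lt_eps0 (ha : ∀ i, a i < eps0) (i : ℕ) : minCover a n i < eps0 := by
  fun_induction minCover a n i with
  | case1 i _ => exact ha i
  | case2 i _ IH => exact raiseEll_lt_eps0 (ha i) IH

lemma minCover_succ_le_ell (htail : ∀ i, n < i → a i = 0) (i : ℕ) :
    minCover a n (i + 1) ≤ ell (minCover a n i) := by
  rcases le_or_gt n i with h | h
  · rw [minCover_of_le a n (h.trans (Nat.le_succ i)), htail (i + 1) (Nat.lt_succ_of_le h)]
    exact zero_le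
  · rw [minCover_of_lt a n h]
    exact le_ell_raiseEll _ _

lemma minCover_le {c : ℕ → Ordinal} (hc : ∀ i, c (i + 1) ≤ ell (c i)) (hac : ∀ i, a i ≤ c i)
    (i : ℕ) : minCover a n i ≤ c i := by
  fun_induction minCover a n i with
  | case1 i _ => exact hac i
  | case2 i _ IH => exact raiseEll_le (hac i) (IH.trans (hc i))

end minCover

theorem stmt_10_general (a : ℕ → Ordinal) (n : ℕ)
    (ha : ∀ i, a i < eps0)
    (htail : ∀ i, n < i → a i = 0) :
    ∃ b : ℕ → Ordinal,
      (∀ i, n < i → b i = 0) ∧ b n = a n ∧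
      (∀ i, i < n →
        b i = if b (i + 1) ≤ ell (a i) then a i else a i + omega0 ^ b (i + 1)) ∧
      IgMem b ∧ (∀ i, a i ≤ b i) ∧
      ∀ c : ℕ → Ordinal, IgMem c → (∀ i, a i ≤ c i) → ∀ i, b i ≤ c i :=
  ⟨minCover a n, fun i hi => (minCover_of_le a n hi.le).trans (htail i hi),
    minCover_of_le a n le_rfl, fun _ hi => minCover_of_lt a n hi,
    ⟨minCover_lt_eps0 a n ha, minCover_succ_le_ell a n htail⟩, le_minCover a n,
    fun _ hc hac => minCover_le a n hc.2 hac⟩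

/-- For a bounded sequence `a` with largest nonzero index `n` (or identically 0),
the sequence `b` defined by downward recursion is the pointwise-least element of
`I` pointwise dominating `a`. -/
theorem stmt_10 (a : ℕ → Ordinal) (n : ℕ)
    (ha : ∀ i, a i < eps0)
    (htail : ∀ i, n < i → a i = 0)
    (hlargest : a n ≠ 0 ∨ ∀ i, a i = 0) :
    ∃ b : ℕ → Ordinal,
      (∀ i, n < i → b i = 0) ∧ b n = a n ∧
      (∀ i, i < n →
        b i = if b (i + 1) ≤ ell (a i) then a i else a i + omega0 ^ b (i + 1)) ∧
      IgMem b ∧ (∀ i, a i ≤ b i) ∧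
      ∀ c : ℕ → Ordinal, IgMem c → (∀ i, a i ≤ c i) → ∀ i, b i ≤ c i :=
  stmt_10_general a n ha htail
end
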